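/- arXiv:2204.13179 — 2 statements merged into one kernel-verified Lean document; each statement's English description precedes it below -/
import Mathlib

section
/- Let 𝒳 ⊆ ℝ be a countable set and Θ a set of parameters. For each θ ∈ Θ let p^θ be a transition matrix on 𝒳 and π^θ an invariant probability vector for p^θ with π^θ i > 0 for all i ∈ 𝒳. Assume that for every θ ≠ θ' in Θ there exist i, j ∈ 𝒳 with p^θ i j ≠ p^{θ'} i j. Then the map G sending θ to the invariant pair distribution function F̂^θ : ℝ × ℝ → ℝ, F̂^θ(x, x') = ∑_{i ∈ 𝒳, i ≤ x} π^θ(i) · ∑_{j ∈ 𝒳, j ≤ x'} p^θ i j, is injective on Θ. -/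
/-!
`F̂^θ` is the distribution function of the discrete measure on `ℝ²` with an atom of mass
`π^θ(i) p^θ(i, j)` at each `(i, j)`. Quadrants `Iic a ×ˢ Iic b` form a generating π-system, so a
finite measure on `ℝ²` is determined by its distribution function, and so are its atoms. Summing the
atoms over `j` recovers `π^θ(i) > 0`, and dividing by it recovers `p^θ(i, j)`.
-/

open MeasureTheory ProbabilityTheory Filter Topology
open scoped Classical

noncomputable section

/-- `p` is a (one-step) transition matrix on `𝒳`. -/
def IsTransMatrix {𝒳 : Type*} (p : 𝒳 → 𝒳 → ℝ) : Prop :=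
  (∀ i j, 0 ≤ p i j) ∧ ∀ i, ∑' j, p i j = 1

/-- `π` is a probability vector on `𝒳`. -/
def IsProbVector {𝒳 : Type*} (π : 𝒳 → ℝ) : Prop :=
  (∀ i, 0 ≤ π i) ∧ ∑' i, π i = 1

/-- `π` is invariant for `p`. -/
def IsInvariantVec {𝒳 : Type*} (p : 𝒳 → 𝒳 → ℝ) (π : 𝒳 → ℝ) : Prop :=
  ∀ j, π j = ∑' i, π i * p i j

/-- `t`-step transition matrix. -/
def matPow {𝒳 : Type*} (p : 𝒳 → 𝒳 → ℝ) : ℕ → 𝒳 → 𝒳 → ℝ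
  | 0 => fun i j => if i = j then (1 : ℝ) else 0
  | n + 1 => fun i j => ∑' k, matPow p n i k * p k j

/-- Ergodicity: from every initial distribution, the time-`t` distribution converges to `π`
in total variation. -/
def IsErgodic {𝒳 : Type*} (p : 𝒳 → 𝒳 → ℝ) (π : 𝒳 → ℝ) : Prop :=
  ∀ μ0 : 𝒳 → ℝ, IsProbVector μ0 →
    Tendsto (fun t => ∑' j, |(∑' i, μ0 i * matPow p t i j) - π j|) atTop (𝓝 0)

/-- `X` is a homogeneous Markov chain with transition matrix `p` under `P`. -/
def IsMarkovChain {𝒳 Ω : Type*} [MeasurableSpace Ω] (P : Measure Ω)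
    (X : ℕ → Ω → 𝒳) (p : 𝒳 → 𝒳 → ℝ) : Prop :=
  ∀ (n : ℕ) (x : Fin (n + 1) → 𝒳) (k : 𝒳),
    P {ω | (∀ t : Fin (n + 1), X t ω = x t) ∧ X (n + 1) ω = k} =
      ENNReal.ofReal (p (x (Fin.last n)) k) * P {ω | ∀ t : Fin (n + 1), X t ω = x t}

/-- Convergence in probability to a constant. -/
def TendstoInProb {Ω : Type*} [MeasurableSpace Ω] (P : Measure Ω)
    (Z : ℕ → Ω → ℝ) (c : ℝ) : Prop :=
  ∀ ε > 0, Tendsto (fun T => P {ω | ε < |Z T ω - c|}) atTop (𝓝 0)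

/-- Transition matrix of the pair chain `Y_n = (X_n, X_{n+1})`. -/
def pairTM {𝒳 : Type*} (p : 𝒳 → 𝒳 → ℝ) : 𝒳 × 𝒳 → 𝒳 × 𝒳 → ℝ :=
  fun y z => if y.2 = z.1 then p z.1 z.2 else 0

open Set
open scoped ENNReal

theorem Real.isCountablySpanning_range_Iic : IsCountablySpanning (range Iic : Set (Set ℝ)) :=
  ⟨fun n : ℕ => Iic (n : ℝ), fun _ => mem_range_self _,
    iUnion_eq_univ_iff.2 fun x => ⟨⌈x⌉₊, Nat.le_ceil x⟩⟩

theorem MeasureTheory.Measure.ext_of_Iic_prod_Iic {μ ν : Measure (ℝ × ℝ)} [IsFiniteMeasure μ]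
    (h : ∀ a b, μ (Iic a ×ˢ Iic b) = ν (Iic a ×ˢ Iic b)) : μ = ν := by
  have hgen := generateFrom_eq_prod (borel_eq_generateFrom_Iic ℝ).symm
    (borel_eq_generateFrom_Iic ℝ).symm Real.isCountablySpanning_range_Iic
    Real.isCountablySpanning_range_Iic
  obtain ⟨B, hBC, hB⟩ :=
    Real.isCountablySpanning_range_Iic.prod Real.isCountablySpanning_range_Iic
  refine ext_of_generateFrom_of_iUnion _ B hgen.symm (isPiSystem_Iic.prod isPiSystem_Iic) hB hBC
    (fun _ => measure_ne_top μ _) ?_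
  rintro _ ⟨_, ⟨a, rfl⟩, _, ⟨b, rfl⟩, rfl⟩
  exact h a b

section WeightedDirac

variable {ι α : Type*} [MeasurableSpace α]

theorem MeasureTheory.Measure.sum_ofReal_smul_dirac_apply {w : ι → ℝ} (hw0 : ∀ k, 0 ≤ w k)
    (hw : Summable w) (x : ι → α) {s : Set α} (hs : MeasurableSet s) :
    Measure.sum (fun k => ENNReal.ofReal (w k) • Measure.dirac (x k)) s =
      ENNReal.ofReal (∑' k, (x ⁻¹' s).indicator w k) := by
  rw [Measure.sum_apply _ hs, ENNReal.ofReal_tsum_of_nonneg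
    (fun k => indicator_nonneg (fun k _ => hw0 k) k) (hw.indicator _)]
  refine tsum_congr fun k => ?_
  rw [Measure.smul_apply, Measure.dirac_apply' _ hs, smul_eq_mul]
  by_cases hk : x k ∈ s <;> simp [hk]

theorem MeasureTheory.Measure.sum_smul_dirac_apply_singleton_of_injective
    [MeasurableSingletonClass α] (c : ι → ℝ≥0∞) {x : ι → α} (hx : Function.Injective x) (k : ι) :
    Measure.sum (fun l => c l • Measure.dirac (x l)) {x k} = c k := by
  rw [Measure.sum_apply _ (measurableSet_singleton _), tsum_eq_single k]
  · simp
  · intro l hl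
    simp [hx.ne hl]

end WeightedDirac

section JointWeights

variable {ι : Type*} {π : ι → ℝ} {p : ι → ι → ℝ}

theorem IsProbVector.summable (hπ : IsProbVector π) : Summable π := by
  by_contra h
  simpa [tsum_eq_zero_of_not_summable h] using hπ.2

theorem IsTransMatrix.summable_row (hp : IsTransMatrix p) (i : ι) : Summable (p i) := by
  by_contra h
  simpa [tsum_eq_zero_of_not_summable h] using hp.2 i

theorem summable_mul_transMatrix (hπ : IsProbVector π) (hp : IsTransMatrix p) :
    Summable fun ij : ι × ι => π ij.1 * p ij.1 ij.2 := by
  refine (summable_prod_of_nonneg fun ij => mul_nonneg (hπ.1 _) (hp.1 _ _)).2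
    ⟨fun i => (hp.summable_row i).mul_left (π i), ?_⟩
  convert hπ.summable with i
  simp only [tsum_mul_left, hp.2, mul_one]

theorem tsum_indicator_prod_mul_transMatrix (hπ : IsProbVector π) (hp : IsTransMatrix p)
    (A B : Set ι) :
    ∑' ij : ι × ι, (A ×ˢ B).indicator (fun ij => π ij.1 * p ij.1 ij.2) ij =
      ∑' i, A.indicator (fun i => π i * ∑' j, B.indicator (p i) j) i := by
  rw [((summable_mul_transMatrix hπ hp).indicator _).tsum_prod]
  refine tsum_congr fun i => ?_
  by_cases hi : i ∈ A
  · simp only [indicator_of_mem hi, ← tsum_mul_left]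
    refine tsum_congr fun j => ?_
    by_cases hj : j ∈ B <;> simp [hi, hj]
  · simp [hi]

theorem IsTransMatrix.eq_of_mul_eq {π' : ι → ℝ} {p' : ι → ι → ℝ} (hp : IsTransMatrix p)
    (hp' : IsTransMatrix p') (hπ : ∀ i, π i ≠ 0) (h : ∀ i j, π i * p i j = π' i * p' i j) :
    p = p' := by
  have hmarg : ∀ i, π i = π' i := fun i =>
    calc π i = ∑' j, π i * p i j := by rw [tsum_mul_left, hp.2, mul_one]
      _ = ∑' j, π' i * p' i j := tsum_congr (h i)
      _ = π' i := by rw [tsum_mul_left, hp'.2, mul_one]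
  funext i j
  exact mul_left_cancel₀ (hπ i) ((h i j).trans (by rw [hmarg]))

end JointWeights

section PairLaw

variable {S : Set ℝ}

/-- The paper's invariant pair distribution function `F̂`. -/
def pairDF (π : S → ℝ) (p : S → S → ℝ) (x : ℝ × ℝ) : ℝ :=
  ∑' i : S, (if (i : ℝ) ≤ x.1 then π i * ∑' j : S, (if (j : ℝ) ≤ x.2 then p i j else 0) else 0)

def pairLaw (π : S → ℝ) (p : S → S → ℝ) : Measure (ℝ × ℝ) :=
  Measure.sum fun ij : S × S =>
    ENNReal.ofReal (π ij.1 * p ij.1 ij.2) • Measure.dirac ((ij.1 : ℝ), (ij.2 : ℝ))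

variable {π π' : S → ℝ} {p p' : S → S → ℝ}

theorem pairLaw_apply (hπ : IsProbVector π) (hp : IsTransMatrix p) {s : Set (ℝ × ℝ)}
    (hs : MeasurableSet s) :
    pairLaw π p s = ENNReal.ofReal (∑' ij : S × S,
      ((fun ij : S × S => ((ij.1 : ℝ), (ij.2 : ℝ))) ⁻¹' s).indicator
        (fun ij => π ij.1 * p ij.1 ij.2) ij) :=
  Measure.sum_ofReal_smul_dirac_apply (fun _ => mul_nonneg (hπ.1 _) (hp.1 _ _))
    (summable_mul_transMatrix hπ hp) _ hs

theorem isFiniteMeasure_pairLaw (hπ : IsProbVector π) (hp : IsTransMatrix p) :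
    IsFiniteMeasure (pairLaw π p) :=
  ⟨by simp only [pairLaw_apply hπ hp MeasurableSet.univ, ENNReal.ofReal_lt_top]⟩

theorem pairLaw_Iic_prod_Iic (hπ : IsProbVector π) (hp : IsTransMatrix p) (a b : ℝ) :
    pairLaw π p (Iic a ×ˢ Iic b) = ENNReal.ofReal (pairDF π p (a, b)) := by
  have hpre : (fun ij : S × S => ((ij.1 : ℝ), (ij.2 : ℝ))) ⁻¹' (Iic a ×ˢ Iic b) =
      {i : S | (i : ℝ) ≤ a} ×ˢ {j : S | (j : ℝ) ≤ b} := rfl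
  rw [pairLaw_apply hπ hp (measurableSet_Iic.prod measurableSet_Iic), hpre,
    tsum_indicator_prod_mul_transMatrix hπ hp]
  simp only [pairDF, indicator_apply, mem_ofPred_eq]

theorem pairLaw_singleton (i j : S) :
    pairLaw π p {((i : ℝ), (j : ℝ))} = ENNReal.ofReal (π i * p i j) :=
  Measure.sum_smul_dirac_apply_singleton_of_injective _
    (Subtype.val_injective.prodMap Subtype.val_injective) (i, j)

theorem eq_of_pairDF_eq (hπ : IsProbVector π) (hp : IsTransMatrix p) (hπ' : IsProbVector π')
    (hp' : IsTransMatrix p') (hpos : ∀ i, 0 < π i) (h : pairDF π p = pairDF π' p') :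
    p = p' := by
  have := isFiniteMeasure_pairLaw hπ hp
  have hlaw : pairLaw π p = pairLaw π' p' := Measure.ext_of_Iic_prod_Iic fun a b => by
    rw [pairLaw_Iic_prod_Iic hπ hp, pairLaw_Iic_prod_Iic hπ' hp', h]
  refine hp.eq_of_mul_eq (π' := π') hp' (fun i => (hpos i).ne') fun i j => ?_
  have hatom := congrArg (· {((i : ℝ), (j : ℝ))}) hlaw
  simp only [pairLaw_singleton] at hatom
  exact (ENNReal.ofReal_eq_ofReal_iff (mul_nonneg (hπ.1 i) (hp.1 i j))
    (mul_nonneg (hπ'.1 i) (hp'.1 i j))).1 hatom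

end PairLaw

theorem invariant_pair_df_injective_general
    (S : Set ℝ) {Θ : Type*}
    (p : Θ → ↥S → ↥S → ℝ) (π : Θ → ↥S → ℝ)
    (hp : ∀ θ, IsTransMatrix (p θ))
    (hπ : ∀ θ, IsProbVector (π θ))
    (hpos : ∀ θ i, 0 < π θ i)
    (hdist : ∀ θ θ', θ ≠ θ' → ∃ i j, p θ i j ≠ p θ' i j) :
    Function.Injective (fun θ : Θ => fun xx : ℝ × ℝ =>
      ∑' i : ↥S, (if (i : ℝ) ≤ xx.1 then
        π θ i * ∑' j : ↥S, (if (j : ℝ) ≤ xx.2 then p θ i j else 0) else 0)) := by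
  intro θ θ' hG
  by_contra hne
  obtain ⟨i, j, hij⟩ := hdist θ θ' hne
  exact hij (congrFun₂ (eq_of_pairDF_eq (hπ θ) (hp θ) (hπ θ') (hp θ') (hpos θ) hG) i j)

/-- under distinguishability of the transition matrices and positivity of the
invariant probabilities, the map `G` sending `θ` to the invariant pair distribution function
`F̂^θ(x,x') = ∑_{i ≤ x} π^θ(i) · ∑_{j ≤ x'} p^θ i j` is injective. -/
theorem invariant_pair_df_injective
    (S : Set ℝ) (hS : S.Countable) {Θ : Type*}
    (p : Θ → ↥S → ↥S → ℝ) (π : Θ → ↥S → ℝ)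
    (hp : ∀ θ, IsTransMatrix (p θ))
    (hπ : ∀ θ, IsProbVector (π θ))
    (hinv : ∀ θ, IsInvariantVec (p θ) (π θ))
    (hpos : ∀ θ i, 0 < π θ i)
    (hdist : ∀ θ θ', θ ≠ θ' → ∃ i j, p θ i j ≠ p θ' i j) :
    Function.Injective (fun θ : Θ => fun xx : ℝ × ℝ =>
      ∑' i : ↥S, (if (i : ℝ) ≤ xx.1 then
        π θ i * ∑' j : ↥S, (if (j : ℝ) ≤ xx.2 then p θ i j else 0) else 0)) :=
  invariant_pair_df_injective_general S p π hp hπ hpos hdist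
end
end

section
/- Let 𝒳 be a countable set, (Ω, 𝓕, P) a probability space, and (X_n)_{n≥0} a homogeneous Markov chain on 𝒳 with transition matrix p. Let π be a probability vector on 𝒳 and suppose the weak law of large numbers holds for the chain: for every i ∈ 𝒳, (1/T) ∑_{s=0}^{T-1} 1(X_s = i) converges in P-probability to π(i) as T → ∞. Then the weak law of large numbers holds for the pair process Y_s = (X_s, X_{s+1}): for all i, j ∈ 𝒳, (1/T) ∑_{s=0}^{T-1} 1(X_s = i, X_{s+1} = j) converges in P-probability to π(i) · p i j as T → ∞. -/
open MeasureTheory ProbabilityTheory Filter Topology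
open scoped Classical

noncomputable section

/-!
Write the pair count as `∑ D s + p i j · ∑ 1(X s = i)` with
`D s = 1(X s = i, X (s+1) = j) - p i j · 1(X s = i)`. By the Markov property `D t` integrates to
zero over every event determined by `X 0, …, X t`, so the bounded variables `D s` are
orthogonal in `L²`. Hence `∑_{s<T} D s` has second moment `O(T)`, and Chebyshev's inequality sends
the averages of `D` to `0` in probability; the averages of `1(X s = i)` tend to `π i` by hypothesis.
-/

open Finset

namespace TendstoInProb

variable {Ω : Type*} [MeasurableSpace Ω] {P : Measure Ω} {Z W : ℕ → Ω → ℝ} {a b : ℝ}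

lemma add (hZ : TendstoInProb P Z a) (hW : TendstoInProb P W b) :
    TendstoInProb P (fun T ω => Z T ω + W T ω) (a + b) := by
  intro ε hε
  have hsub : ∀ T, {ω | ε < |Z T ω + W T ω - (a + b)|} ⊆
      {ω | ε / 2 < |Z T ω - a|} ∪ {ω | ε / 2 < |W T ω - b|} := by
    intro T ω hω
    by_contra h
    simp only [Set.mem_union, Set.mem_ofPred_eq, not_or, not_lt] at hω h
    have := abs_add_le (Z T ω - a) (W T ω - b)
    rw [show Z T ω - a + (W T ω - b) = Z T ω + W T ω - (a + b) by ring] at this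
    linarith
  have hlim := (hZ (ε / 2) (half_pos hε)).add (hW (ε / 2) (half_pos hε))
  rw [add_zero] at hlim
  exact tendsto_of_tendsto_of_tendsto_of_le_of_le tendsto_const_nhds hlim (fun _ => zero_le)
    fun T => (measure_mono (hsub T)).trans (measure_union_le _ _)

lemma const_mul (hZ : TendstoInProb P Z a) (c : ℝ) :
    TendstoInProb P (fun T ω => c * Z T ω) (c * a) := by
  intro ε hε
  have hc : 0 < |c| + 1 := by positivity
  have hsub : ∀ T, {ω | ε < |c * Z T ω - c * a|} ⊆ {ω | ε / (|c| + 1) < |Z T ω - a|} := by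
    intro T ω hω
    simp only [Set.mem_ofPred_eq, ← mul_sub, abs_mul] at hω ⊢
    rw [div_lt_iff₀ hc]
    nlinarith [abs_nonneg (Z T ω - a)]
  exact tendsto_of_tendsto_of_tendsto_of_le_of_le tendsto_const_nhds (hZ _ (div_pos hε hc))
    (fun _ => zero_le) fun T => measure_mono (hsub T)

end TendstoInProb

section Orthogonal

variable {Ω : Type*} [MeasurableSpace Ω] {P : Measure Ω}

lemma measure_lt_abs_le_integral_sq_div [IsFiniteMeasure P] {Z : Ω → ℝ}
    (hZ : Integrable (fun ω => Z ω ^ 2) P) {ε : ℝ} (hε : 0 < ε) :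
    P {ω | ε < |Z ω|} ≤ ENNReal.ofReal ((∫ ω, Z ω ^ 2 ∂P) / ε ^ 2) := by
  have hmarkov := mul_meas_ge_le_integral_of_nonneg
    (Eventually.of_forall fun ω => sq_nonneg (Z ω)) hZ (ε ^ 2)
  have hsub : {ω | ε < |Z ω|} ⊆ {ω | ε ^ 2 ≤ Z ω ^ 2} := fun ω hω => by
    rw [Set.mem_ofPred_eq, ← sq_abs (Z ω)]
    exact pow_le_pow_left₀ hε.le (le_of_lt hω) 2
  calc P {ω | ε < |Z ω|} ≤ P {ω | ε ^ 2 ≤ Z ω ^ 2} := measure_mono hsub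
    _ = ENNReal.ofReal (P.real {ω | ε ^ 2 ≤ Z ω ^ 2}) :=
        (ofReal_measureReal (measure_ne_top _ _)).symm
    _ ≤ _ := ENNReal.ofReal_le_ofReal (by rw [le_div_iff₀ (by positivity)]; linarith)

variable [IsProbabilityMeasure P] {D : ℕ → Ω → ℝ} {C : ℝ}

lemma integral_sq_sum_le_of_orthogonal (hD : ∀ s, Measurable (D s))
    (hC : ∀ s ω, |D s ω| ≤ C) (horth : ∀ s t, s < t → ∫ ω, D s ω * D t ω ∂P = 0) (T : ℕ) :
    ∫ ω, (∑ s ∈ range T, D s ω) ^ 2 ∂P ≤ T * C ^ 2 := by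
  have hprod_le : ∀ s t ω, |D s ω * D t ω| ≤ C ^ 2 := fun s t ω => by
    rw [abs_mul, sq]
    exact mul_le_mul (hC s ω) (hC t ω) (abs_nonneg _) ((abs_nonneg _).trans (hC s ω))
  have hint : ∀ s t, Integrable (fun ω => D s ω * D t ω) P := fun s t =>
    .of_bound ((hD s).mul (hD t)).aestronglyMeasurable _
      (Eventually.of_forall (hprod_le s t))
  have horth' : ∀ s t, s ≠ t → ∫ ω, D s ω * D t ω ∂P = 0 := by
    intro s t hst
    rcases hst.lt_or_gt with h | h
    · exact horth s t h
    · simp_rw [mul_comm (D s _)]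
      exact horth t s h
  calc ∫ ω, (∑ s ∈ range T, D s ω) ^ 2 ∂P
      = ∑ s ∈ range T, ∑ t ∈ range T, ∫ ω, D s ω * D t ω ∂P := by
        simp_rw [sq, sum_mul_sum]
        rw [integral_finsetSum _ fun s _ => integrable_finsetSum _ fun t _ => hint s t]
        exact sum_congr rfl fun s _ => integral_finsetSum _ fun t _ => hint s t
    _ = ∑ s ∈ range T, ∫ ω, D s ω * D s ω ∂P :=
        sum_congr rfl fun s hs =>
          sum_eq_single_of_mem s hs fun t _ hts => horth' s t (Ne.symm hts)
    _ ≤ ∑ s ∈ range T, C ^ 2 := sum_le_sum fun s _ => by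
        simpa using integral_mono (hint s s) (integrable_const (C ^ 2))
          fun ω => (le_abs_self _).trans (hprod_le s s ω)
    _ = T * C ^ 2 := by simp

lemma tendstoInProb_average_of_orthogonal (hD : ∀ s, Measurable (D s))
    (hC : ∀ s ω, |D s ω| ≤ C) (horth : ∀ s t, s < t → ∫ ω, D s ω * D t ω ∂P = 0) :
    TendstoInProb P (fun T ω => (T : ℝ)⁻¹ * ∑ s ∈ range T, D s ω) 0 := by
  intro ε hε
  have hbound : ∀ T : ℕ, 0 < T →
      P {ω | ε < |(T : ℝ)⁻¹ * ∑ s ∈ range T, D s ω - 0|} ≤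
        ENNReal.ofReal (C ^ 2 / ε ^ 2 * (T : ℝ)⁻¹) := by
    intro T hT
    have hT' : (0 : ℝ) < T := Nat.cast_pos.mpr hT
    have hL2 : MemLp (fun ω => (T : ℝ)⁻¹ * ∑ s ∈ range T, D s ω) 2 P := by
      refine MemLp.const_mul ?_ _
      refine memLp_finsetSum _ fun s _ => ?_
      exact MemLp.of_bound (hD s).aestronglyMeasurable C (Eventually.of_forall (hC s))
    simp_rw [sub_zero]
    refine (measure_lt_abs_le_integral_sq_div hL2.integrable_sq hε).trans
      (ENNReal.ofReal_le_ofReal ?_)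
    simp_rw [mul_pow, integral_const_mul]
    rw [div_mul_eq_mul_div, div_le_div_iff_of_pos_right (by positivity)]
    calc ((T : ℝ)⁻¹) ^ 2 * ∫ ω, (∑ s ∈ range T, D s ω) ^ 2 ∂P
        ≤ ((T : ℝ)⁻¹) ^ 2 * (T * C ^ 2) :=
          mul_le_mul_of_nonneg_left (integral_sq_sum_le_of_orthogonal hD hC horth T)
            (by positivity)
      _ = C ^ 2 * (T : ℝ)⁻¹ := by field_simp
  have hlim : Tendsto (fun T : ℕ => ENNReal.ofReal (C ^ 2 / ε ^ 2 * (T : ℝ)⁻¹)) atTop (𝓝 0) := by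
    rw [← ENNReal.ofReal_zero]
    refine ENNReal.tendsto_ofReal ?_
    simpa using (tendsto_inv_atTop_zero.comp tendsto_natCast_atTop_atTop).const_mul
      (C ^ 2 / ε ^ 2)
  exact tendsto_of_tendsto_of_tendsto_of_le_of_le' tendsto_const_nhds hlim
    (Eventually.of_forall fun _ => zero_le)
    (eventually_gt_atTop 0 |>.mono hbound)

end Orthogonal

section MarkovChain

variable {𝒳 Ω : Type*} {X : ℕ → Ω → 𝒳} {p : 𝒳 → 𝒳 → ℝ}

-- A martingale difference for the natural filtration of `X`, by the Markov property.
variable (X p) in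
def centeredPairIndicator (i j : 𝒳) (s : ℕ) (ω : Ω) : ℝ :=
  (if X s ω = i ∧ X (s + 1) ω = j then 1 else 0) - p i j * (if X s ω = i then 1 else 0)

lemma abs_centeredPairIndicator_le {i j : 𝒳} (hp : 0 ≤ p i j) (s : ℕ) (ω : Ω) :
    |centeredPairIndicator X p i j s ω| ≤ 1 + p i j := by
  unfold centeredPairIndicator
  split_ifs <;> simp only [mul_one, mul_zero] <;> rw [abs_le] <;> constructor <;> linarith

variable [MeasurableSpace 𝒳] [MeasurableSingletonClass 𝒳] [MeasurableSpace Ω] {P : Measure Ω}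

lemma measurable_centeredPairIndicator (hX : ∀ n, Measurable (X n)) (i j : 𝒳) (s : ℕ) :
    Measurable (centeredPairIndicator X p i j s) := by
  have hXs : MeasurableSet {ω | X s ω = i} := hX s (measurableSet_singleton i)
  have hXs' : MeasurableSet {ω | X (s + 1) ω = j} := hX (s + 1) (measurableSet_singleton j)
  exact (Measurable.ite (hXs.inter hXs') measurable_const measurable_const).sub
    ((Measurable.ite hXs measurable_const measurable_const).const_mul _)

lemma integrable_centeredPairIndicator [IsFiniteMeasure P] (hX : ∀ n, Measurable (X n))
    {i j : 𝒳} (hp : 0 ≤ p i j) (s : ℕ) : Integrable (centeredPairIndicator X p i j s) P :=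
  .of_bound (measurable_centeredPairIndicator hX i j s).aestronglyMeasurable _
    (Eventually.of_forall (abs_centeredPairIndicator_le hp s))

variable [Countable 𝒳]

lemma measurableSet_history_mem (hX : ∀ n, Measurable (X n)) {t : ℕ}
    (S : Set (Fin (t + 1) → 𝒳)) : MeasurableSet {ω | (fun r : Fin (t + 1) => X r ω) ∈ S} :=
  (measurable_pi_lambda (fun ω (r : Fin (t + 1)) => X r ω) fun r => hX r)
    S.to_countable.measurableSet

lemma IsMarkovChain.measure_history_inter (hMC : IsMarkovChain P X p)
    (hX : ∀ n, Measurable (X n)) {t : ℕ} {i : 𝒳} (S : Set (Fin (t + 1) → 𝒳))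
    (hS : ∀ x ∈ S, x (Fin.last t) = i) (j : 𝒳) :
    P ({ω | (fun r : Fin (t + 1) => X r ω) ∈ S} ∩ {ω | X (t + 1) ω = j}) =
      ENNReal.ofReal (p i j) * P {ω | (fun r : Fin (t + 1) => X r ω) ∈ S} := by
  set H : Ω → Fin (t + 1) → 𝒳 := fun ω r => X r ω
  have hB : MeasurableSet {ω | X (t + 1) ω = j} := hX _ (measurableSet_singleton j)
  have hatom : ∀ x, H ⁻¹' {x} = {ω | ∀ r : Fin (t + 1), X r ω = x r} := fun x => by
    ext ω
    simp [H, funext_iff]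
  have hatom_meas : ∀ x ∈ S, MeasurableSet (H ⁻¹' {x}) := fun x _ =>
    measurableSet_history_mem hX {x}
  calc P (H ⁻¹' S ∩ {ω | X (t + 1) ω = j})
      = P.restrict {ω | X (t + 1) ω = j} (H ⁻¹' S) := (Measure.restrict_apply' hB).symm
    _ = ∑' x : S, P.restrict {ω | X (t + 1) ω = j} (H ⁻¹' {(x : Fin (t + 1) → 𝒳)}) :=
        (tsum_measure_preimage_singleton S.to_countable hatom_meas).symm
    _ = ∑' x : S, ENNReal.ofReal (p i j) * P (H ⁻¹' {(x : Fin (t + 1) → 𝒳)}) := by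
        refine tsum_congr fun x => ?_
        rw [Measure.restrict_apply' hB, hatom, ← hS x x.2]
        exact hMC t x j
    _ = ENNReal.ofReal (p i j) * P (H ⁻¹' S) := by
        rw [ENNReal.tsum_mul_left, tsum_measure_preimage_singleton S.to_countable hatom_meas]

lemma IsMarkovChain.setIntegral_centeredPairIndicator_eq_zero [IsFiniteMeasure P]
    (hMC : IsMarkovChain P X p) (hX : ∀ n, Measurable (X n)) {i j : 𝒳} (hp : 0 ≤ p i j)
    (t : ℕ) (S : Set (Fin (t + 1) → 𝒳)) :
    ∫ ω in {ω | (fun r : Fin (t + 1) => X r ω) ∈ S}, centeredPairIndicator X p i j t ω ∂P =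
      0 := by
  set A := {ω | (fun r : Fin (t + 1) => X r ω) ∈ S ∩ {x | x (Fin.last t) = i}}
  set B := {ω | X (t + 1) ω = j}
  have hA : MeasurableSet A := measurableSet_history_mem hX _
  have hB : MeasurableSet B := hX _ (measurableSet_singleton j)
  have hmarkov : P.real (A ∩ B) = p i j * P.real A := by
    rw [measureReal_def, measureReal_def, hMC.measure_history_inter hX _ (fun x hx => hx.2),
      ENNReal.toReal_mul, ENNReal.toReal_ofReal hp]
  have hsplit : ∀ ω, {ω | (fun r : Fin (t + 1) => X r ω) ∈ S}.indicator
      (centeredPairIndicator X p i j t) ω =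
        (A ∩ B).indicator 1 ω - p i j * A.indicator 1 ω := fun ω => by
    simp only [Set.indicator_apply, centeredPairIndicator, A, B]
    split_ifs <;> simp_all
  rw [← integral_indicator (measurableSet_history_mem hX S),
    integral_congr_ae (Eventually.of_forall hsplit),
    integral_sub ((integrable_const 1).indicator (hA.inter hB))
      (((integrable_const 1).indicator hA).const_mul _),
    integral_const_mul, integral_indicator_one (hA.inter hB), integral_indicator_one hA, hmarkov,
    sub_self]

lemma IsMarkovChain.integral_centeredPairIndicator_mul_eq_zero [IsFiniteMeasure P]
    (hMC : IsMarkovChain P X p) (hX : ∀ n, Measurable (X n)) {i j : 𝒳} (hp : 0 ≤ p i j)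
    {s t : ℕ} (hst : s < t) :
    ∫ ω, centeredPairIndicator X p i j s ω * centeredPairIndicator X p i j t ω ∂P = 0 := by
  set A := {ω | X s ω = i ∧ X (s + 1) ω = j}
  set B := {ω | X s ω = i}
  have hA_past : A = {ω | (fun r : Fin (t + 1) => X r ω) ∈
      {x | x ⟨s, by omega⟩ = i ∧ x ⟨s + 1, by omega⟩ = j}} := rfl
  have hB_past : B = {ω | (fun r : Fin (t + 1) => X r ω) ∈ {x | x ⟨s, by omega⟩ = i}} := rfl
  have hA : MeasurableSet A := hA_past ▸ measurableSet_history_mem hX _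
  have hB : MeasurableSet B := hB_past ▸ measurableSet_history_mem hX _
  have hsplit : ∀ ω, centeredPairIndicator X p i j s ω * centeredPairIndicator X p i j t ω =
      A.indicator (centeredPairIndicator X p i j t) ω -
        p i j * B.indicator (centeredPairIndicator X p i j t) ω := fun ω => by
    simp only [Set.indicator_apply, A, B, Set.mem_ofPred_eq]
    rw [centeredPairIndicator]
    split_ifs <;> ring
  have hDt := integrable_centeredPairIndicator (P := P) hX hp t
  rw [integral_congr_ae (Eventually.of_forall hsplit),
    integral_sub (hDt.indicator hA) ((hDt.indicator hB).const_mul _), integral_const_mul,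
    integral_indicator hA, integral_indicator hB, hA_past, hB_past,
    hMC.setIntegral_centeredPairIndicator_eq_zero hX hp,
    hMC.setIntegral_centeredPairIndicator_eq_zero hX hp, mul_zero, sub_zero]

end MarkovChain

theorem pair_LLN_of_LLN_general
    {𝒳 : Type*} [Countable 𝒳] [MeasurableSpace 𝒳] [MeasurableSingletonClass 𝒳]
    {Ω : Type*} [MeasurableSpace Ω] (P : Measure Ω) [IsProbabilityMeasure P]
    (X : ℕ → Ω → 𝒳) (hX : ∀ n, Measurable (X n))
    (p : 𝒳 → 𝒳 → ℝ) (hp : IsTransMatrix p)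
    (hMC : IsMarkovChain P X p)
    (π : 𝒳 → ℝ)
    (hLLN : ∀ i : 𝒳,
      TendstoInProb P
        (fun T ω => (T : ℝ)⁻¹ * ∑ s ∈ Finset.range T, (if X s ω = i then (1 : ℝ) else 0))
        (π i)) :
    ∀ i j : 𝒳,
      TendstoInProb P
        (fun T ω => (T : ℝ)⁻¹ * ∑ s ∈ Finset.range T,
          (if X s ω = i ∧ X (s + 1) ω = j then (1 : ℝ) else 0))
        (π i * p i j) := by
  intro i j
  have hcentered := tendstoInProb_average_of_orthogonal (P := P)
    (measurable_centeredPairIndicator hX i j) (abs_centeredPairIndicator_le (hp.1 i j))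
    fun s t hst => hMC.integral_centeredPairIndicator_mul_eq_zero hX (hp.1 i j) hst
  convert hcentered.add ((hLLN i).const_mul (p i j)) using 1
  · funext T ω
    simp only [centeredPairIndicator, sum_sub_distrib, ← mul_sum]
    ring
  · ring

/-- for a homogeneous Markov chain, the weak LLN for single-state frequencies
(with limits `π(i)`) implies the weak LLN for pair frequencies (with limits `π(i) · p i j`). -/
theorem pair_LLN_of_LLN
    {𝒳 : Type*} [Countable 𝒳] [MeasurableSpace 𝒳] [MeasurableSingletonClass 𝒳]
    {Ω : Type*} [MeasurableSpace Ω] (P : Measure Ω) [IsProbabilityMeasure P]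
    (X : ℕ → Ω → 𝒳) (hX : ∀ n, Measurable (X n))
    (p : 𝒳 → 𝒳 → ℝ) (hp : IsTransMatrix p)
    (hMC : IsMarkovChain P X p)
    (π : 𝒳 → ℝ) (hπ : IsProbVector π)
    (hLLN : ∀ i : 𝒳,
      TendstoInProb P
        (fun T ω => (T : ℝ)⁻¹ * ∑ s ∈ Finset.range T, (if X s ω = i then (1 : ℝ) else 0))
        (π i)) :
    ∀ i j : 𝒳,
      TendstoInProb P
        (fun T ω => (T : ℝ)⁻¹ * ∑ s ∈ Finset.range T,
          (if X s ω = i ∧ X (s + 1) ω = j then (1 : ℝ) else 0))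
        (π i * p i j) :=
  pair_LLN_of_LLN_general P X hX p hp hMC π hLLN
end
end
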